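/- For every n ≥ 2 and every k ∈ {1,…,n}, the coordinate derivation ∂/∂zₖ belongs to the smallest Lie subalgebra of the derivations of ℂ[z₁,…,zₙ] containing U, V′ and V″. -/

import Mathlib

open MvPolynomial

/-- The polynomial vector field `f ∂/∂zₖ`: the derivation of `ℂ[z₁,…,zₙ]`
sending the coordinate `zₖ` to `f` and all other coordinates to `0`. -/
noncomputable def der (n : ℕ) (f : MvPolynomial (Fin n) ℂ) (k : Fin n) :
    Derivation ℂ (MvPolynomial (Fin n) ℂ) (MvPolynomial (Fin n) ℂ) :=
  MvPolynomial.mkDerivation ℂ (Pi.single k f)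

/-- `U = ∂/∂zₙ`  (coordinates are `0`-indexed: `zₖ = X ⟨k-1,_⟩`). -/
noncomputable def U (n : ℕ) :
    Derivation ℂ (MvPolynomial (Fin n) ℂ) (MvPolynomial (Fin n) ℂ) :=
  MvPolynomial.mkDerivation ℂ (fun i => if (i : ℕ) = n - 1 then 1 else 0)

/-- `V′ = ∂/∂zₙ + zₙ⁵ ∂/∂z_{n−1} + zₙ² z_{n−1}⁵ ∂/∂z_{n−2} + ⋯ + zₙ² z_{n−1}² ⋯ z₃² z₂⁵ ∂/∂z₁`,
i.e. `V′(zₙ) = 1` and `V′(zₖ) = zₙ² z_{n−1}² ⋯ z_{k+2}² · z_{k+1}⁵` for `1 ≤ k ≤ n−1`. -/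
noncomputable def V' (n : ℕ) :
    Derivation ℂ (MvPolynomial (Fin n) ℂ) (MvPolynomial (Fin n) ℂ) :=
  MvPolynomial.mkDerivation ℂ (fun i =>
    if h : (i : ℕ) + 1 < n then
      (∏ j ∈ Finset.univ.filter (fun j : Fin n => (i : ℕ) + 1 < (j : ℕ)), (X j) ^ 2) *
        (X (⟨(i : ℕ) + 1, h⟩ : Fin n)) ^ 5
    else 1)

/-- `V″ = ∂/∂z₁ + z₁⁵ ∂/∂z₂ + z₁² z₂⁵ ∂/∂z₃ + ⋯ + z₁² z₂² ⋯ z_{n−2}² z_{n−1}⁵ ∂/∂zₙ`,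
i.e. `V″(z₁) = 1` and `V″(zₖ) = z₁² z₂² ⋯ z_{k−2}² · z_{k−1}⁵` for `2 ≤ k ≤ n`. -/
noncomputable def V'' (n : ℕ) :
    Derivation ℂ (MvPolynomial (Fin n) ℂ) (MvPolynomial (Fin n) ℂ) :=
  MvPolynomial.mkDerivation ℂ (fun i =>
    if h : 0 < (i : ℕ) then
      (∏ j ∈ Finset.univ.filter (fun j : Fin n => (j : ℕ) < (i : ℕ) - 1), (X j) ^ 2) *
        (X (⟨(i : ℕ) - 1, lt_of_le_of_lt (Nat.sub_le _ _) i.isLt⟩ : Fin n)) ^ 5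
    else 1)

/-!
Downward induction on the coordinate: `∂/∂zₙ = U`. Suppose every `∂/∂zⱼ` with `j > k` is
already in the Lie algebra. Bracketing `V′` five times with `∂/∂z_{k+1}` differentiates each of
its coefficients five times in `z_{k+1}`; since `V′(zₖ)` is the only coefficient of
`z_{k+1}`-degree `5` (the others have degree `2` or `0`), what survives is
`5! · zₙ² ⋯ z_{k+2}² ∂/∂zₖ`. Each remaining square `zⱼ²` is then removed by bracketing twice
with `∂/∂zⱼ`, and rescaling gives `∂/∂zₖ`.
-/

section PartialDerivatives

variable {R σ : Type*}

theorem iterate_pderiv_monomial [CommSemiring R] (i : σ) (r : ℕ) (s : σ →₀ ℕ) (a : R) :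
    (pderiv i)^[r] (monomial s a) =
      monomial (s - Finsupp.single i r) (a * (s i).descFactorial r) := by
  induction r with
  | zero => simp
  | succ r ih =>
    rw [Function.iterate_succ_apply', ih, pderiv_monomial, tsub_tsub, ← Finsupp.single_add,
      Finsupp.tsub_apply, Finsupp.single_eq_same, Nat.descFactorial_succ, Nat.cast_mul,
      mul_comm ((s i - r : ℕ) : R), mul_assoc]

section CommRing

variable [CommRing R]

theorem lie_pderiv_mkDerivation (i : σ) (c : σ → MvPolynomial σ R) :
    ⁅(pderiv i : Derivation R (MvPolynomial σ R) (MvPolynomial σ R)), mkDerivation R c⁆ =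
      mkDerivation R fun j => pderiv i (c j) := by
  classical
  refine derivation_ext fun j => ?_
  rw [Derivation.commutator_apply, mkDerivation_X, mkDerivation_X, pderiv_X]
  obtain rfl | hij := eq_or_ne i j
  · simp
  · simp [Pi.single_eq_of_ne' hij]

variable {L : LieSubalgebra R (Derivation R (MvPolynomial σ R) (MvPolynomial σ R))}

theorem mkDerivation_iterate_pderiv_mem {i : σ} (hi : pderiv i ∈ L)
    {c : σ → MvPolynomial σ R} (hc : mkDerivation R c ∈ L) (r : ℕ) :
    mkDerivation R (fun j => (pderiv i)^[r] (c j)) ∈ L := by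
  induction r with
  | zero => exact hc
  | succ r ih =>
    simp_rw [Function.iterate_succ_apply']
    rw [← lie_pderiv_mkDerivation]
    exact L.lie_mem hi ih

end CommRing

theorem pderiv_mem_of_mkDerivation_single_monomial_mem [Field R] [CharZero R] [DecidableEq σ]
    {L : LieSubalgebra R (Derivation R (MvPolynomial σ R) (MvPolynomial σ R))}
    (k : σ) {s : σ →₀ ℕ} (hs : ∀ j ∈ s.support, pderiv j ∈ L) {a : R} (ha : a ≠ 0)
    (h : mkDerivation R (Pi.single k (monomial s a)) ∈ L) : pderiv k ∈ L := by
  induction s using Finsupp.induction generalizing a with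
  | zero =>
    have hk : pderiv k = a⁻¹ • mkDerivation R (Pi.single k (monomial 0 a)) := by
      refine derivation_ext fun i => ?_
      rw [Derivation.smul_apply, mkDerivation_X, pderiv_X]
      obtain rfl | hik := eq_or_ne i k
      · rw [Pi.single_eq_same, Pi.single_eq_same, monomial_zero', smul_eq_C_mul, ← C_mul,
          inv_mul_cancel₀ ha, C_1]
      · simp [Pi.single_eq_of_ne hik]
    rw [hk]
    exact L.smul_mem _ h
  | single_add j b f hj hb ih =>
    have hsupp : ∀ i ∈ f.support, i ∈ (Finsupp.single j b + f).support := fun i hi => by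
      rw [Finsupp.mem_support_iff] at hi ⊢
      simp [hi]
    have hj' : pderiv j ∈ L := hs j (by simp [hb, Finsupp.notMem_support_iff.mp hj])
    have hder : mkDerivation R
        (Pi.single k ((pderiv j)^[b] (monomial (Finsupp.single j b + f) a))) ∈ L := by
      rw [Pi.single_op (fun _ => (pderiv j)^[b]) (fun _ => iterate_map_zero _ _)]
      exact mkDerivation_iterate_pderiv_mem hj' h b
    rw [iterate_pderiv_monomial, add_tsub_cancel_left, Finsupp.add_apply,
      Finsupp.single_eq_same, Finsupp.notMem_support_iff.mp hj, add_zero,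
      Nat.descFactorial_self] at hder
    exact ih (fun i hi => hs i (hsupp i hi))
      (mul_ne_zero ha (Nat.cast_ne_zero.mpr b.factorial_ne_zero)) hder

end PartialDerivatives

section V'

variable {n : ℕ}

noncomputable def V'Exponent (n : ℕ) (i : Fin n) : Fin n →₀ ℕ :=
  Finsupp.equivFunOnFinite.symm fun j =>
    if (i : ℕ) + 1 < j then 2 else if (j : ℕ) = i + 1 then 5 else 0

theorem V'_eq_mkDerivation_monomial (n : ℕ) :
    V' n = mkDerivation ℂ fun i => monomial (V'Exponent n i) 1 := by
  rw [V']
  congr 1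
  funext i
  split_ifs with hi
  · simp_rw [X_pow_eq_monomial]
    rw [← monomial_sum_one, monomial_mul, one_mul]
    congr 2
    ext j
    simp only [V'Exponent, Finsupp.coe_add, Finsupp.coe_finsetSum, Pi.add_apply, Finset.sum_apply,
      Finsupp.single_apply, Finset.sum_ite_eq', Finset.mem_filter, Finset.mem_univ, true_and,
      Finsupp.coe_equivFunOnFinite_symm]
    simp only [Fin.ext_iff]
    split_ifs <;> omega
  · have : V'Exponent n i = 0 := by
      ext j
      simp only [V'Exponent, Finsupp.coe_equivFunOnFinite_symm, Finsupp.coe_zero, Pi.zero_apply]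
      have := j.isLt
      split_ifs <;> omega
    rw [this, one_def]

theorem iterate_pderiv_monomial_V'Exponent {k : Fin n} (hk : (k : ℕ) + 1 < n) (i : Fin n) :
    (pderiv ⟨k + 1, hk⟩)^[5] (monomial (V'Exponent n i) (1 : ℂ)) =
      Pi.single (M := fun _ => MvPolynomial (Fin n) ℂ) k
        (monomial (V'Exponent n k - Finsupp.single ⟨k + 1, hk⟩ 5) 120) i := by
  rw [iterate_pderiv_monomial]
  obtain rfl | hik := eq_or_ne i k
  · simp [V'Exponent, Nat.descFactorial]
  · rw [Pi.single_eq_of_ne hik, Nat.descFactorial_eq_zero_iff_lt.mpr, Nat.cast_zero, mul_zero,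
      monomial_zero]
    have := Fin.val_ne_of_ne hik
    simp only [V'Exponent, Finsupp.coe_equivFunOnFinite_symm]
    split_ifs <;> omega

theorem pderiv_mem_of_V'_mem_of_forall_gt
    {L : LieSubalgebra ℂ (Derivation ℂ (MvPolynomial (Fin n) ℂ) (MvPolynomial (Fin n) ℂ))}
    (hV' : V' n ∈ L) {k : Fin n} (hk : (k : ℕ) + 1 < n) (h : ∀ j, k < j → pderiv j ∈ L) :
    pderiv k ∈ L := by
  have hfifth := mkDerivation_iterate_pderiv_mem
    (h ⟨k + 1, hk⟩ (Fin.mk_lt_mk.mpr (Nat.lt_add_one k))) (V'_eq_mkDerivation_monomial n ▸ hV') 5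
  simp only [iterate_pderiv_monomial_V'Exponent hk] at hfifth
  refine pderiv_mem_of_mkDerivation_single_monomial_mem k (fun j hj => h j ?_) (by norm_num) hfifth
  have hj' := Finsupp.mem_support_iff.mp (Finsupp.support_tsub hj)
  simp only [V'Exponent, Finsupp.coe_equivFunOnFinite_symm] at hj'
  split_ifs at hj' <;> omega

theorem pderiv_eq_U {k : Fin n} (hk : (k : ℕ) = n - 1) : pderiv k = U n := by
  rw [pderiv_def, U]
  congr 1
  funext i
  simp only [Pi.single_apply, Fin.ext_iff, hk]

end V'

theorem pderiv_mem_lieSpan_UV'V''_general (n : ℕ) (k : Fin n) :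
    der n 1 k ∈
      LieSubalgebra.lieSpan ℂ (Derivation ℂ (MvPolynomial (Fin n) ℂ) (MvPolynomial (Fin n) ℂ))
        {U n, V' n, V'' n} := by
  rw [der, ← pderiv_def]
  induction k using WellFoundedGT.induction with
  | _ k ih =>
    by_cases hk : (k : ℕ) + 1 < n
    · exact pderiv_mem_of_V'_mem_of_forall_gt (LieSubalgebra.subset_lieSpan (by simp)) hk ih
    · rw [pderiv_eq_U (by omega)]
      exact LieSubalgebra.subset_lieSpan (by simp)

/-- For every `n ≥ 2` and every `k`, the coordinate derivation `∂/∂zₖ` lies in the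
smallest Lie subalgebra of the derivations of `ℂ[z₁,…,zₙ]` containing `U`, `V′`, `V″`. -/
theorem pderiv_mem_lieSpan_UV'V'' (n : ℕ) (hn : 2 ≤ n) (k : Fin n) :
    der n 1 k ∈
      LieSubalgebra.lieSpan ℂ (Derivation ℂ (MvPolynomial (Fin n) ℂ) (MvPolynomial (Fin n) ℂ))
        {U n, V' n, V'' n} :=
  pderiv_mem_lieSpan_UV'V''_general n k
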